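/- In every convergent historyless interaction system with self-independent reaction functions and more than one stable state, for any uncommitted state a and any node i, there is a finite activation path from a that activates node i at least once and visits no committed state. -/

import Mathlib

/-!
Suppose instead that every path from `a` activating `i` meets a committed state, and let `R` be
the set of states reachable from `a` through uncommitted states only. Then every activation set
containing `i` commits each `x ∈ R`, and self-independence forces all these commitments to agree
with that of the singleton `{i}`: activating `k` after `s ∪ {i}` or after `s ∪ {i, k}` gives the
same state. Hence along any trajectory from `a`, with `c` the commitment of `step f {i} a`, each
state either is committed to `c` or lies in `R` with `{i}` still committing it to `c`. As `a` is
uncommitted, some fair trajectory from `a` does not converge to `c`; its limit is stable, hence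
committed to itself, so it is neither committed to `c` nor in `R`.
-/

variable {n : ℕ} {A : Fin n → Type*}

/-- One step of historyless dynamics. -/
def step (f : ∀ i, (∀ j, A j) → A i) (s : Finset (Fin n)) (a : ∀ j, A j) : ∀ j, A j :=
  fun i => if i ∈ s then f i a else a i

/-- The `(a0, σ)`-trajectory of the historyless system. -/
def traj (f : ∀ i, (∀ j, A j) → A i) (σ : ℕ → Finset (Fin n)) (a0 : ∀ j, A j) :
    ℕ → ∀ j, A j
  | 0 => a0
  | t + 1 => step f (σ (t + 1)) (traj f σ a0 t)

/-- A schedule is fair if it activates every node infinitely often. -/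
def Fair (σ : ℕ → Finset (Fin n)) : Prop := ∀ i : Fin n, ∀ T : ℕ, ∃ t ≥ T, i ∈ σ t

/-- A sequence of states converges to `b` if it is eventually constantly `b`. -/
def Converges (x : ℕ → ∀ j, A j) (b : ∀ j, A j) : Prop := ∃ T : ℕ, ∀ t > T, x t = b

/-- A state `a` is committed to `b` if every fair trajectory from `a` converges to `b`. -/
def Committed (f : ∀ i, (∀ j, A j) → A i) (a b : ∀ j, A j) : Prop :=
  ∀ σ : ℕ → Finset (Fin n), Fair σ → Converges (traj f σ a) b

/-- Self-independence: each `f i` ignores node `i`'s own action. -/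
def SelfIndep (f : ∀ i, (∀ j, A j) → A i) : Prop :=
  ∀ (i : Fin n) (a a' : ∀ j, A j), (∀ j, j ≠ i → a j = a' j) → f i a = f i a' 

/-- A stable state is a fixed point of `f`. -/
def Stable (f : ∀ i, (∀ j, A j) → A i) (a : ∀ j, A j) : Prop := ∀ i, f i a = a i

/-- The system is convergent if every fair trajectory converges. -/
def Convergent (f : ∀ i, (∀ j, A j) → A i) : Prop :=
  ∀ (a : ∀ j, A j) (σ : ℕ → Finset (Fin n)), Fair σ → ∃ b, Converges (traj f σ a) b
/-- Applying a finite sequence of activation sets successively. -/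
def runPath (f : ∀ i, (∀ j, A j) → A i) : List (Finset (Fin n)) → (∀ j, A j) → ∀ j, A j
  | [], a => a
  | s :: L, a => runPath f L (step f s a)

def Uncommitted (f : ∀ i, (∀ j, A j) → A i) (x : ∀ j, A j) : Prop :=
  ∀ c, ¬ Committed f x c

def ActivationCommits (f : ∀ i, (∀ j, A j) → A i) (i : Fin n) (x : ∀ j, A j) : Prop :=
  ∀ s, i ∈ s → ∃ e, Committed f (step f s x) e

def UncommittedPath (f : ∀ i, (∀ j, A j) → A i) (a : ∀ j, A j)
    (L : List (Finset (Fin n))) : Prop :=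
  ∀ p, p <+: L → Uncommitted f (runPath f p a)

variable {f : ∀ i, (∀ j, A j) → A i}

lemma fair_const_univ : Fair (fun _ : ℕ => (Finset.univ : Finset (Fin n))) :=
  fun i T => ⟨T, le_rfl, Finset.mem_univ i⟩

lemma Fair.shift {σ : ℕ → Finset (Fin n)} (hσ : Fair σ) (T : ℕ) : Fair (fun u => σ (u + T)) := by
  intro j T'
  obtain ⟨u, hu, hju⟩ := hσ j (T' + T)
  exact ⟨u - T, by omega, by simpa [Nat.sub_add_cancel (show T ≤ u by omega)] using hju⟩

lemma Converges.unique {x : ℕ → ∀ j, A j} {b b' : ∀ j, A j} (h : Converges x b)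
    (h' : Converges x b') : b = b' := by
  obtain ⟨T, hT⟩ := h
  obtain ⟨T', hT'⟩ := h'
  exact (hT (T + T' + 1) (by omega)).symm.trans (hT' (T + T' + 1) (by omega))

lemma traj_add (σ : ℕ → Finset (Fin n)) (a : ∀ j, A j) (T t : ℕ) :
    traj f σ a (T + t) = traj f (fun u => σ (u + T)) (traj f σ a T) t := by
  induction t with
  | zero => rfl
  | succ t ih =>
    show step f (σ (T + t + 1)) (traj f σ a (T + t)) = step f (σ (t + 1 + T)) _
    rw [ih, show T + t + 1 = t + 1 + T by omega]

lemma Committed.unique {x e e' : ∀ j, A j} (h : Committed f x e) (h' : Committed f x e') :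
    e = e' :=
  (h _ fair_const_univ).unique (h' _ fair_const_univ)

lemma Committed.step {x e : ∀ j, A j} (h : Committed f x e) (s : Finset (Fin n)) :
    Committed f (step f s x) e := by
  intro σ hσ
  let τ : ℕ → Finset (Fin n) := fun t => if t ≤ 1 then s else σ (t - 1)
  have hτ : ∀ t, traj f τ x (t + 1) = traj f σ (_root_.step f s x) t := by
    intro t
    induction t with
    | zero => simp [traj, τ]
    | succ t ih =>
      show _root_.step f (τ (t + 2)) (traj f τ x (t + 1)) = _root_.step f (σ (t + 1)) _
      rw [ih]
      simp [τ]
  have hτfair : Fair τ := by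
    intro j T
    obtain ⟨t, ht, hjt⟩ := hσ j (T + 1)
    exact ⟨t + 1, by omega, by simpa [τ, show ¬ t + 1 ≤ 1 by omega] using hjt⟩
  obtain ⟨T, hT⟩ := h τ hτfair
  exact ⟨T, fun t ht => hτ t ▸ hT (t + 1) (by omega)⟩

lemma Committed.converges_of_traj {σ : ℕ → Finset (Fin n)} (hσ : Fair σ) {a c : ∀ j, A j}
    {T : ℕ} (h : Committed f (traj f σ a T) c) : Converges (traj f σ a) c := by
  obtain ⟨T', hT'⟩ := h _ (hσ.shift T)
  refine ⟨T + T', fun t ht => ?_⟩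
  rw [← Nat.add_sub_cancel' (show T ≤ t by omega), traj_add]
  exact hT' _ (by omega)

lemma Stable.step_eq {d : ∀ j, A j} (hd : Stable f d) (s : Finset (Fin n)) : step f s d = d := by
  funext j
  by_cases h : j ∈ s <;> simp [step, h, hd j]

lemma Stable.committed {d : ∀ j, A j} (hd : Stable f d) : Committed f d d := by
  intro σ _
  have h : ∀ t, traj f σ d t = d := by
    intro t
    induction t with
    | zero => rfl
    | succ t ih => exact (congrArg _ ih).trans (hd.step_eq _)
  exact ⟨0, fun t _ => h t⟩

lemma stable_of_converges_traj {σ : ℕ → Finset (Fin n)} (hσ : Fair σ) {a d : ∀ j, A j}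
    (hd : Converges (traj f σ a) d) : Stable f d := by
  obtain ⟨T, hT⟩ := hd
  intro j
  obtain ⟨t, ht, hjt⟩ := hσ j (T + 2)
  obtain ⟨t, rfl⟩ : ∃ t', t = t' + 1 := ⟨t - 1, by omega⟩
  have hj : traj f σ a (t + 1) j = f j (traj f σ a t) := by simp [traj, step, hjt]
  rwa [hT (t + 1) (by omega), hT t (by omega), eq_comm] at hj

/-- The two inner states differ only at `k`, which `f k` ignores. -/
lemma step_singleton_step_insert (hsi : SelfIndep f) (k : Fin n) (s : Finset (Fin n))
    (x : ∀ j, A j) : step f {k} (step f (insert k s) x) = step f {k} (step f s x) := by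
  have hagree : ∀ j, j ≠ k → step f (insert k s) x j = step f s x j := by
    intro j hj
    simp [step, hj]
  funext j
  by_cases hj : j = k
  · subst hj
    simpa [step] using hsi j _ _ hagree
  · simp [step, hj]

section Commitment

lemma ActivationCommits.committed_step (hsi : SelfIndep f) {i : Fin n} {x e : ∀ j, A j}
    (hx : ActivationCommits f i x) (he : Committed f (step f {i} x) e) {s : Finset (Fin n)}
    (hs : i ∈ s) : Committed f (step f s x) e := by
  suffices ∀ s, Committed f (step f (insert i s) x) e by
    simpa [Finset.insert_eq_of_mem hs] using this s
  intro s
  induction s using Finset.induction_on with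
  | empty => simpa using he
  | insert k s _ ih =>
    obtain ⟨e', he'⟩ := hx (insert i (insert k s)) (Finset.mem_insert_self i _)
    rw [Finset.insert_comm] at he'
    have hee' : e = e' := by
      refine (ih.step {k}).unique ?_
      rw [← step_singleton_step_insert hsi]
      exact he'.step {k}
    rwa [hee', Finset.insert_comm]

lemma ActivationCommits.step_committed_or (hsi : SelfIndep f) {i : Fin n} {x c : ∀ j, A j}
    (hx : ActivationCommits f i x) (hc : Committed f (step f {i} x) c) (s : Finset (Fin n)) :
    Committed f (step f s x) c ∨
      (Uncommitted f (step f s x) ∧ Committed f (step f {i} (step f s x)) c) := by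
  have hci : Committed f (step f {i} (step f s x)) c := by
    rw [← step_singleton_step_insert hsi]
    exact (hx.committed_step hsi hc (Finset.mem_insert_self i s)).step {i}
  by_cases hunc : Uncommitted f (step f s x)
  · exact Or.inr ⟨hunc, hci⟩
  · obtain ⟨e, he⟩ := not_forall_not.mp hunc
    exact Or.inl ((he.step {i}).unique hci ▸ he)

variable {R : Set (∀ j, A j)} {i : Fin n}

lemma traj_mem_or_committed (hsi : SelfIndep f) (hR : ∀ x ∈ R, ActivationCommits f i x)
    (hRstep : ∀ x ∈ R, ∀ s, Uncommitted f (step f s x) → step f s x ∈ R)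
    {a c : ∀ j, A j} (ha : a ∈ R) (hc : Committed f (step f {i} a) c)
    (σ : ℕ → Finset (Fin n)) (t : ℕ) :
    (traj f σ a t ∈ R ∧ Committed f (step f {i} (traj f σ a t)) c) ∨
      Committed f (traj f σ a t) c := by
  induction t with
  | zero => exact Or.inl ⟨ha, hc⟩
  | succ t ih =>
    rcases ih with ⟨hxR, hxc⟩ | hxc
    · rcases (hR _ hxR).step_committed_or hsi hxc (σ (t + 1)) with hcom | ⟨hunc, hci⟩
      · exact Or.inr hcom
      · exact Or.inl ⟨hRstep _ hxR _ hunc, hci⟩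
    · exact Or.inr (hxc.step _)

lemma false_of_activationCommits (hconv : Convergent f) (hsi : SelfIndep f)
    (hR : ∀ x ∈ R, ActivationCommits f i x) (hRunc : ∀ x ∈ R, Uncommitted f x)
    (hRstep : ∀ x ∈ R, ∀ s, Uncommitted f (step f s x) → step f s x ∈ R)
    {a : ∀ j, A j} (ha : a ∈ R) : False := by
  obtain ⟨c, hc⟩ := hR a ha {i} (Finset.mem_singleton_self i)
  obtain ⟨σ, hσ, hnot⟩ : ∃ σ, Fair σ ∧ ¬ Converges (traj f σ a) c := by
    simpa [Committed] using hRunc a ha c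
  obtain ⟨d, hd⟩ := hconv a σ hσ
  have hdcom : Committed f d d := (stable_of_converges_traj hσ hd).committed
  obtain ⟨T, hT⟩ := hd
  rcases traj_mem_or_committed hsi hR hRstep ha hc σ (T + 1) with ⟨hmem, _⟩ | hcom
  · exact hRunc _ hmem d (hT (T + 1) (by omega) ▸ hdcom)
  · exact hnot (hcom.converges_of_traj hσ)

end Commitment

lemma runPath_concat (p : List (Finset (Fin n))) (s : Finset (Fin n)) (a : ∀ j, A j) :
    runPath f (p ++ [s]) a = step f s (runPath f p a) := by
  induction p generalizing a with
  | nil => rfl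
  | cons t p ih => exact ih _

lemma UncommittedPath.concat {a : ∀ j, A j} {p : List (Finset (Fin n))}
    (hp : UncommittedPath f a p) {s : Finset (Fin n)}
    (hs : Uncommitted f (step f s (runPath f p a))) : UncommittedPath f a (p ++ [s]) := by
  intro q hq
  rcases List.prefix_concat_iff.mp hq with rfl | hq
  · rwa [runPath_concat]
  · exact hp q hq

theorem stmt2_general (n : ℕ) (A : Fin n → Type*)
    (f : ∀ i, (∀ j, A j) → A i) (hconv : Convergent f) (hsi : SelfIndep f)
    (a : ∀ j, A j) (ha : ∀ c : ∀ j, A j, ¬ Committed f a c) (i : Fin n) :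
    ∃ L : List (Finset (Fin n)),
      (∃ s ∈ L, i ∈ s) ∧
      ∀ p : List (Finset (Fin n)), p <+: L →
        ∀ c : ∀ j, A j, ¬ Committed f (runPath f p a) c := by
  by_contra hcon
  let R : Set (∀ j, A j) := {x | ∃ p, UncommittedPath f a p ∧ runPath f p a = x}
  refine false_of_activationCommits (R := R) (i := i) hconv hsi ?_ ?_ ?_ (a := a)
    ⟨[], fun q hq => List.prefix_nil.mp hq ▸ ha, rfl⟩
  · rintro _ ⟨p, hp, rfl⟩ s hs
    by_contra hunc
    exact hcon ⟨p ++ [s], ⟨s, by simp, hs⟩, hp.concat (not_exists.mp hunc)⟩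
  · rintro _ ⟨p, hp, rfl⟩
    exact hp p List.prefix_rfl
  · rintro _ ⟨p, hp, rfl⟩ s hs
    exact ⟨p ++ [s], hp.concat hs, runPath_concat p s a⟩

/-- In every convergent historyless interaction system with self-independent reaction
functions and more than one stable state, for any uncommitted state `a` and any node
`i`, there is a finite activation path from `a` that activates node `i` at least once
and visits no committed state. -/
theorem stmt2 (n : ℕ) (A : Fin n → Type*)
    (f : ∀ i, (∀ j, A j) → A i) (hconv : Convergent f) (hsi : SelfIndep f)
    (b b' : ∀ j, A j) (hb : Stable f b) (hb' : Stable f b') (hne : b ≠ b')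
    (a : ∀ j, A j) (ha : ∀ c : ∀ j, A j, ¬ Committed f a c) (i : Fin n) :
    ∃ L : List (Finset (Fin n)),
      (∃ s ∈ L, i ∈ s) ∧
      ∀ p : List (Finset (Fin n)), p <+: L →
        ∀ c : ∀ j, A j, ¬ Committed f (runPath f p a) c :=
  stmt2_general n A f hconv hsi a ha i
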